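/- Let n ≥ 3 and let T ⊆ {1,…,n} be nonempty with T ∩ {n−1, n} = ∅ (so T ⊆ {1,…,n−2}). If |T| is odd, the geometric realization of the induced subcomplex K''_{χ'',T} is homotopy equivalent to the sphere S^{|T|}. If |T| is even, the geometric realization of K''_{χ'',T} is homotopy equivalent to the sphere S^{|T|−1}. -/

import Mathlib

/-- The `(i,j)` entry of the characteristic matrix `χ''` of the small cover over
`P₆ × I^{n−2}` (rows `1,…,n`, columns `1,…,2n+2`): row `i` has `1`'s exactly at positions
`i`, `n+1`, `n+1+i` and `2n+2`. -/
def chi''Entry (n i j : ℕ) : ZMod 2 :=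
  if j = i ∨ j = n + 1 ∨ j = n + 1 + i ∨ j = 2 * n + 2 then 1 else 0

/-- The support of `χ''_T = ∑_{i∈T} (row i of χ'')`, as a subset of `{1,…,2n+2}`. -/
def chi''Supp (n : ℕ) (T : Finset ℕ) : Finset ℕ :=
  (Finset.Icc 1 (2 * n + 2)).filter (fun j => (∑ i ∈ T, chi''Entry n i j) ≠ 0)

/-- The vertex set of the 6-cycle `C₆`, in cyclic order `n+1, n−1, n, 2n+2, 2n, 2n+1`. -/
def hexCyc (n : ℕ) : Finset ℕ := {n + 1, n - 1, n, 2 * n + 2, 2 * n, 2 * n + 1}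

/-- The edges of the 6-cycle `C₆` with vertices `n+1, n−1, n, 2n+2, 2n, 2n+1` in cyclic
order. -/
def hexEdges (n : ℕ) : Finset (Finset ℕ) :=
  {{n + 1, n - 1}, {n - 1, n}, {n, 2 * n + 2}, {2 * n + 2, 2 * n}, {2 * n, 2 * n + 1},
   {2 * n + 1, n + 1}}

/-- Faces of `K''`, the simplicial join of the 6-cycle `C₆` (on vertices
`n+1, n−1, n, 2n+2, 2n, 2n+1`) with the boundary complex of the `(n−2)`-dimensional cross
polytope on `{1,…,n−2} ∪ {n+2,…,2n−1}` with antipodal pairs `{i, n+1+i}` (`1 ≤ i ≤ n−2`):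
`t` is a face iff its intersection with the cycle is a face of the cycle (empty, a vertex,
or an edge) and it contains no antipodal pair. -/
def hexFace (n : ℕ) (t : Finset ℕ) : Prop :=
  t ⊆ Finset.Icc 1 (2 * n + 2) ∧
  (∀ i ∈ Finset.Icc 1 (n - 2), ¬(i ∈ t ∧ n + 1 + i ∈ t)) ∧
  (t ∩ hexCyc n = ∅ ∨ (∃ a ∈ hexCyc n, t ∩ hexCyc n = {a}) ∨ t ∩ hexCyc n ∈ hexEdges n)

/-- The geometric realization of an abstract simplicial complex with vertices among
`{0,…,m−1}`, whose faces are given by the predicate `K`: the space of convex weight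
functions whose support is a face of `K`. -/
abbrev GeomReal (m : ℕ) (K : Finset ℕ → Prop) : Type :=
  {f : Fin m → ℝ // (∀ v, 0 ≤ f v) ∧ (∑ v, f v = 1) ∧
    K ((Finset.univ.filter (fun v => f v ≠ 0)).image Fin.val)}

/-! Since `T ⊆ {1,…,n−2}`, the support of `χ''_T` is the union of the pairs `{i, n+1+i}` for
`i ∈ T` and, exactly when `|T|` is odd, of the pair `{n+1, 2n+2}`. The latter consists of opposite
vertices of the hexagon, so it spans no edge of `K''`, and the induced subcomplex is the boundary
of a cross polytope on `|T|` or `|T|+1` antipodal pairs. Its realization is the unit sphere of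
`ℓ¹` via `f ↦ (f (P j) - f (N j))_j`, and radial projection carries that onto the Euclidean
sphere. -/

open Finset Function Metric

section UnitSphere

variable {E F : Type*} [NormedAddCommGroup E] [NormedSpace ℝ E] [NormedAddCommGroup F]
  [NormedSpace ℝ F]

open NormedSpace

lemma normalize_mem_unitSphere {x : E} (hx : x ≠ 0) : normalize x ∈ sphere (0 : E) 1 := by
  simpa using norm_normalize hx

lemma continuousOn_normalize : ContinuousOn (normalize : E → E) {0}ᶜ :=
  (continuous_norm.continuousOn.inv₀ fun _ hx => norm_ne_zero_iff.2 hx).smul continuousOn_id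

lemma ContinuousLinearEquiv.normalize_symm_normalize (e : E ≃L[ℝ] F) {x : E} (hx : ‖x‖ = 1) :
    normalize (e.symm (normalize (e x))) = x := by
  have hne : e x ≠ 0 := e.map_ne_zero_iff.2 (norm_pos_iff.1 (by rw [hx]; exact one_pos))
  rw [show normalize (e x) = ‖e x‖⁻¹ • e x from rfl, map_smul, e.symm_apply_apply,
    normalize_smul_of_pos (inv_pos.2 (norm_pos_iff.2 hne)), normalize_eq_self_of_norm_eq_one hx]

noncomputable def ContinuousLinearEquiv.unitSphereHomeomorph (e : E ≃L[ℝ] F) :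
    sphere (0 : E) 1 ≃ₜ sphere (0 : F) 1 where
  toFun x := ⟨normalize (e x),
    normalize_mem_unitSphere (by simpa using ne_zero_of_mem_unit_sphere x)⟩
  invFun y := ⟨normalize (e.symm y),
    normalize_mem_unitSphere (by simpa using ne_zero_of_mem_unit_sphere y)⟩
  left_inv x := Subtype.ext (e.normalize_symm_normalize (norm_eq_of_mem_sphere x))
  right_inv y :=
    Subtype.ext (by simpa using e.symm.normalize_symm_normalize (norm_eq_of_mem_sphere y))
  continuous_toFun := .subtype_mk (continuousOn_normalize.comp_continuous
    (e.continuous.comp continuous_subtype_val) fun x => by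
      simpa using ne_zero_of_mem_unit_sphere x) _
  continuous_invFun := .subtype_mk (continuousOn_normalize.comp_continuous
    (e.symm.continuous.comp continuous_subtype_val) fun y => by
      simpa using ne_zero_of_mem_unit_sphere y) _

end UnitSphere

section Extend

variable {α β : Type*}

lemma extend_zero_nonneg {M : Type*} [Preorder M] [Zero M] {v : α → β} {y : α → M} (hy : 0 ≤ y) :
    0 ≤ extend v y 0 := by
  intro w
  classical
  rw [extend_def]
  split_ifs
  exacts [hy _, le_rfl]

lemma Fintype.sum_extend_zero [Fintype α] [Fintype β] {M : Type*} [AddCommMonoid M]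
    {v : α → β} (hv : Injective v) (y : α → M) : ∑ w, extend v y 0 w = ∑ s, y s :=
  (Fintype.sum_of_injective v hv y (extend v y 0) (fun w hw => extend_apply' y (0 : β → M) w hw)
    fun s => (hv.extend_apply y 0 s).symm).symm

end Extend

lemma posPart_sub_negPart_of_eq_zero_or {α : Type*} [AddCommGroup α] [LinearOrder α]
    [IsOrderedAddMonoid α] {a b : α} (ha : 0 ≤ a) (hb : 0 ≤ b) (hab : a = 0 ∨ b = 0) :
    (a - b)⁺ = a ∧ (a - b)⁻ = b := by
  rcases hab with rfl | rfl <;> simp [ha, hb]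

section CrossPolytope

variable {ι : Type*}

/-- Faces of the boundary complex of the cross polytope with antipodal pairs `{P j, N j}`. -/
def crossPolytopeFace (P N : ι → ℕ) (t : Finset ℕ) : Prop :=
  (∀ v ∈ t, ∃ j, v = P j ∨ v = N j) ∧ ∀ j, ¬(P j ∈ t ∧ N j ∈ t)

variable {m : ℕ} {v : ι ⊕ ι → Fin m}

lemma crossPolytopeFace_support_iff (f : Fin m → ℝ) :
    crossPolytopeFace (fun j => (v (.inl j) : ℕ)) (fun j => v (.inr j))
        ((univ.filter (f · ≠ 0)).image Fin.val) ↔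
      (∀ w, f w ≠ 0 → w ∈ Set.range v) ∧ ∀ j, f (v (.inl j)) = 0 ∨ f (v (.inr j)) = 0 := by
  simp only [crossPolytopeFace, Fin.val_injective.mem_finset_image, mem_image, mem_filter,
    mem_univ, true_and, forall_exists_index, and_imp, forall_apply_eq_imp_iff₂, Fin.val_inj,
    Set.mem_range, Sum.exists, not_and_or, not_not, ← exists_or]
  simp only [eq_comm]

variable [Fintype ι]

lemma norm_toLp_sub_eq_one
    (f : GeomReal m (crossPolytopeFace (fun j => (v (.inl j) : ℕ)) (fun j => v (.inr j))))
    (hv : Injective v) : ‖WithLp.toLp 1 fun j => f.1 (v (.inl j)) - f.1 (v (.inr j))‖ = 1 := by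
  obtain ⟨hnn, hsum, hface⟩ := f.2
  obtain ⟨hsupp, hpair⟩ := (crossPolytopeFace_support_iff f.1).1 hface
  rw [PiLp.norm_eq_of_L1]
  calc ∑ j, ‖f.1 (v (.inl j)) - f.1 (v (.inr j))‖ = ∑ s, f.1 (v s) := by
        rw [Fintype.sum_sum_type, ← sum_add_distrib]
        refine sum_congr rfl fun j _ => ?_
        obtain ⟨hpos, hneg⟩ := posPart_sub_negPart_of_eq_zero_or (hnn _) (hnn _) (hpair j)
        simp [← posPart_add_negPart, hpos, hneg]
    _ = ∑ w, f.1 w := Fintype.sum_of_injective v hv _ _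
        (fun w hw => not_not.1 fun h => hw (hsupp w h)) fun _ => rfl
    _ = 1 := hsum

lemma extend_posPart_negPart_mem_geomReal (hv : Injective v) {x : WithLp 1 (ι → ℝ)}
    (hx : ‖x‖ = 1) :
    let f := extend v (Sum.elim (fun j => (x j)⁺) fun j => (x j)⁻) 0
    (∀ w, 0 ≤ f w) ∧ ∑ w, f w = 1 ∧
      crossPolytopeFace (fun j => (v (.inl j) : ℕ)) (fun j => v (.inr j))
        ((univ.filter (f · ≠ 0)).image Fin.val) := by
  refine ⟨extend_zero_nonneg (M := ℝ) (by rintro (j | j) <;> simp [posPart_nonneg, negPart_nonneg]),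
    ?_, (crossPolytopeFace_support_iff _).2 ⟨fun w hw => ?_, fun j => ?_⟩⟩
  · rw [PiLp.norm_eq_of_L1] at hx
    rw [Fintype.sum_extend_zero hv, Fintype.sum_sum_type, ← sum_add_distrib]
    simpa [posPart_add_negPart] using hx
  · by_contra hw'
    exact hw (extend_apply' _ _ _ hw')
  · simp only [hv.extend_apply, Sum.elim_inl, Sum.elim_inr, posPart_eq_zero, negPart_eq_zero]
    exact le_total _ _

noncomputable def crossPolytopeRealizationHomeomorph (hv : Injective v) :
    GeomReal m (crossPolytopeFace (fun j => (v (.inl j) : ℕ)) (fun j => v (.inr j))) ≃ₜ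
      sphere (0 : WithLp 1 (ι → ℝ)) 1 where
  toFun f := ⟨WithLp.toLp 1 fun j => f.1 (v (.inl j)) - f.1 (v (.inr j)),
    mem_sphere_zero_iff_norm.2 (norm_toLp_sub_eq_one f hv)⟩
  invFun x := ⟨_, extend_posPart_negPart_mem_geomReal hv (norm_eq_of_mem_sphere x)⟩
  left_inv f := by
    obtain ⟨hnn, -, hface⟩ := f.2
    obtain ⟨hsupp, hpair⟩ := (crossPolytopeFace_support_iff f.1).1 hface
    ext w
    by_cases hw : ∃ s, v s = w
    · obtain ⟨j | j, rfl⟩ := hw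
      · simpa [hv.extend_apply] using
          (posPart_sub_negPart_of_eq_zero_or (hnn _) (hnn _) (hpair j)).1
      · simpa [hv.extend_apply] using
          (posPart_sub_negPart_of_eq_zero_or (hnn _) (hnn _) (hpair j)).2
    · exact (extend_apply' _ _ _ hw).trans (not_not.1 fun h => hw (hsupp w h)).symm
  right_inv x := by
    ext j
    simp [hv.extend_apply, posPart_sub_negPart]
  continuous_toFun := by
    refine .subtype_mk ((PiLp.continuous_toLp 1 _).comp (continuous_pi fun j => ?_)) _
    exact ((continuous_apply _).comp continuous_subtype_val).sub
      ((continuous_apply _).comp continuous_subtype_val)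
  continuous_invFun := by
    refine .subtype_mk (continuous_pi fun w => ?_) _
    by_cases hw : ∃ s, v s = w
    · obtain ⟨j | j, rfl⟩ := hw
      · simp only [hv.extend_apply, Sum.elim_inl]
        fun_prop
      · simp only [hv.extend_apply, Sum.elim_inr]
        fun_prop
    · simp only [extend_apply' _ _ _ hw]
      exact continuous_const

theorem nonempty_homeomorph_geomReal_crossPolytopeFace {k : ℕ} {P N : ι → ℕ}
    (hP : ∀ j, P j < m) (hN : ∀ j, N j < m) (hPN : Injective (Sum.elim P N))
    (hk : Fintype.card ι = k) :
    Nonempty (GeomReal m (crossPolytopeFace P N) ≃ₜ sphere (0 : EuclideanSpace ℝ (Fin k)) 1) := by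
  let v : ι ⊕ ι → Fin m := fun s => ⟨Sum.elim P N s, by cases s <;> simp [hP, hN]⟩
  have hv : Injective v := fun a b h => hPN (congrArg Fin.val h)
  let e : WithLp 1 (ι → ℝ) ≃L[ℝ] EuclideanSpace ℝ (Fin k) :=
    .ofFinrankEq (by simp [(WithLp.linearEquiv 1 ℝ (ι → ℝ)).finrank_eq, hk])
  exact ⟨(crossPolytopeRealizationHomeomorph hv).trans e.unitSphereHomeomorph⟩

end CrossPolytope

section Hex

variable {n : ℕ} {T : Finset ℕ}

/-- Indices `i` of the antipodal pairs `{i, n + 1 + i}` that make up `supp χ''_T`; for odd `|T|`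
the index `n + 1` contributes the pair `{n + 1, 2 * n + 2}`. -/
def chi''Pairs (n : ℕ) (T : Finset ℕ) : Finset ℕ :=
  if Even #T then T else insert (n + 1) T

lemma mem_chi''Supp (hT : T ⊆ Icc 1 (n - 2)) {v : ℕ} :
    v ∈ chi''Supp n T ↔
      (∃ i ∈ T, v = i ∨ v = n + 1 + i) ∨ (¬Even #T ∧ (v = n + 1 ∨ v = 2 * n + 2)) := by
  have hb : ∀ i ∈ T, 1 ≤ i ∧ i ≤ n - 2 := fun i hi => mem_Icc.1 (hT hi)
  simp only [chi''Supp, chi''Entry, mem_filter, sum_boole, Ne, ZMod.natCast_eq_zero_iff_even,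
    mem_Icc]
  by_cases hc : v = n + 1 ∨ v = 2 * n + 2
  · rw [filter_true_of_mem fun i _ => by tauto]
    have hvT : ¬∃ i ∈ T, v = i ∨ v = n + 1 + i := fun ⟨i, hi, h⟩ => by have := hb i hi; omega
    simp only [hvT, hc, false_or, and_true]
    exact and_iff_right (by omega)
  · rw [not_or] at hc
    simp only [hc.1, hc.2, or_false, false_or, and_false]
    by_cases hv : ∃ i ∈ T, v = i ∨ v = n + 1 + i
    · obtain ⟨i, hi, hvi⟩ := hv
      have hfilter : T.filter (fun j => v = j ∨ v = n + 1 + j) = {i} := by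
        ext j
        simp only [mem_filter, mem_singleton]
        constructor
        · rintro ⟨hj, hvj⟩
          have := hb i hi; have := hb j hj; omega
        · rintro rfl; exact ⟨hi, hvi⟩
      have := hb i hi
      rw [hfilter, card_singleton]
      exact iff_of_true ⟨by omega, Nat.not_even_one⟩ ⟨i, hi, hvi⟩
    · rw [filter_false_of_mem fun j hj h => hv ⟨j, hj, h⟩, card_empty]
      exact iff_of_false (fun h => h.2 .zero) hv

lemma mem_chi''Supp_iff_exists_mem_chi''Pairs (hT : T ⊆ Icc 1 (n - 2)) {v : ℕ} :
    v ∈ chi''Supp n T ↔ ∃ i ∈ chi''Pairs n T, v = i ∨ v = n + 1 + i := by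
  rw [mem_chi''Supp hT, chi''Pairs]
  split_ifs with heven
  · simp [heven]
  · simp only [heven, not_false_eq_true, true_and, exists_mem_insert,
      show n + 1 + (n + 1) = 2 * n + 2 by ring]
    exact or_comm

lemma notMem_hexEdges_of_subset_pair (hn : 2 ≤ n) {c : Finset ℕ}
    (hc : c ⊆ {n + 1, 2 * n + 2}) : c ∉ hexEdges n := fun he => by
  simp only [hexEdges, mem_insert, mem_singleton] at he
  rcases he with rfl | rfl | rfl | rfl | rfl | rfl <;> simp [insert_subset_iff] at hc <;> omega

lemma hexCyc_face_iff_of_subset_pair (hn : 2 ≤ n) {c : Finset ℕ} (hc : c ⊆ {n + 1, 2 * n + 2}) :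
    (c = ∅ ∨ (∃ a ∈ hexCyc n, c = {a}) ∨ c ∈ hexEdges n) ↔ ¬(n + 1 ∈ c ∧ 2 * n + 2 ∈ c) := by
  have hc' : ∀ a ∈ c, a = n + 1 ∨ a = 2 * n + 2 := by simpa [subset_iff] using hc
  rw [or_iff_left (notMem_hexEdges_of_subset_pair hn hc)]
  constructor
  · rintro (rfl | ⟨a, -, rfl⟩) ⟨h1, h2⟩
    · simp at h1
    · rw [mem_singleton] at h1 h2; omega
  · intro hboth
    refine c.eq_empty_or_nonempty.imp id fun ⟨a, ha⟩ =>
      ⟨a, ?_, eq_singleton_iff_unique_mem.2 ⟨ha, fun b hb => ?_⟩⟩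
    · rcases hc' a ha with rfl | rfl <;> simp [hexCyc]
    · rcases hc' a ha with rfl | rfl <;> rcases hc' b hb with rfl | rfl
      exacts [rfl, absurd ⟨ha, hb⟩ hboth, absurd ⟨hb, ha⟩ hboth, rfl]

lemma hexFace_iff_of_subset_chi''Supp (hn : 2 ≤ n) {t : Finset ℕ}
    (hT : T ⊆ Icc 1 (n - 2)) (ht : t ⊆ chi''Supp n T) :
    hexFace n t ↔ ∀ i ∈ chi''Pairs n T, ¬(i ∈ t ∧ n + 1 + i ∈ t) := by
  have hb : ∀ i ∈ T, 1 ≤ i ∧ i ≤ n - 2 := fun i hi => mem_Icc.1 (hT hi)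
  have hmem : ∀ v ∈ t, (∃ i ∈ T, v = i ∨ v = n + 1 + i) ∨ v = n + 1 ∨ v = 2 * n + 2 :=
    fun v hv => ((mem_chi''Supp hT).1 (ht hv)).imp_right And.right
  have hcyc : t ∩ hexCyc n ⊆ {n + 1, 2 * n + 2} := fun v hv => by
    simp only [mem_inter, hexCyc, mem_insert, mem_singleton] at hv ⊢
    rcases hmem v hv.1 with ⟨i, hi, h⟩ | h
    · have := hb i hi; omega
    · exact h
  have hanti : (∀ i ∈ Icc 1 (n - 2), ¬(i ∈ t ∧ n + 1 + i ∈ t)) ↔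
      ∀ i ∈ T, ¬(i ∈ t ∧ n + 1 + i ∈ t) := by
    refine ⟨fun h i hi => h i (hT hi), fun h i hi hit => h i ?_ hit⟩
    rw [mem_Icc] at hi
    rcases hmem i hit.1 with ⟨j, hj, rfl | h⟩ | h
    · exact hj
    all_goals (try have := hb j hj); omega
  rw [hexFace, and_iff_right (ht.trans (filter_subset _ _)), hanti,
    hexCyc_face_iff_of_subset_pair hn hcyc, chi''Pairs]
  simp only [mem_inter, hexCyc, mem_insert, mem_singleton, true_or, or_true, and_true]
  split_ifs with heven
  · refine and_iff_left fun ⟨h, _⟩ => ?_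
    rcases (mem_chi''Supp hT).1 (ht h) with ⟨i, hi, h⟩ | ⟨hodd, -⟩
    · have := hb i hi; omega
    · exact hodd heven
  · rw [forall_mem_insert, and_comm, show n + 1 + (n + 1) = 2 * n + 2 by ring]

lemma hexSubcomplex_eq_crossPolytopeFace (hn : 2 ≤ n) (hT : T ⊆ Icc 1 (n - 2)) :
    (fun t => hexFace n t ∧ t ⊆ chi''Supp n T) =
      crossPolytopeFace (fun i : chi''Pairs n T => (i : ℕ)) (fun i => n + 1 + i) := by
  funext t
  rw [eq_iff_iff, and_congr_left (hexFace_iff_of_subset_chi''Supp hn hT), subset_iff]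
  simp only [mem_chi''Supp_iff_exists_mem_chi''Pairs hT, crossPolytopeFace, Subtype.exists,
    Subtype.forall, exists_prop]
  exact and_comm

lemma chi''Pairs_subset (hT : T ⊆ Icc 1 (n - 2)) : chi''Pairs n T ⊆ Icc 1 (n + 1) := by
  unfold chi''Pairs
  split_ifs
  · exact hT.trans (Icc_subset_Icc_right (by omega))
  · exact insert_subset (by simp) (hT.trans (Icc_subset_Icc_right (by omega)))

lemma card_chi''Pairs (hT : T ⊆ Icc 1 (n - 2)) :
    #(chi''Pairs n T) = if Even #T then #T else #T + 1 := by
  unfold chi''Pairs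
  split_ifs
  · rfl
  · exact card_insert_of_notMem fun h => by have := mem_Icc.1 (hT h); omega

end Hex

lemma nonempty_homeomorph_geomReal_crossPolytopeFace_shift {n k : ℕ} {U : Finset ℕ}
    (hU : U ⊆ Icc 1 (n + 1)) (hk : #U = k) :
    Nonempty (GeomReal (2 * n + 3) (crossPolytopeFace (fun i : U => (i : ℕ)) (n + 1 + ·)) ≃ₜ
      sphere (0 : EuclideanSpace ℝ (Fin k)) 1) := by
  have hb (i : U) : 1 ≤ (i : ℕ) ∧ (i : ℕ) ≤ n + 1 := mem_Icc.1 (hU i.2)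
  refine nonempty_homeomorph_geomReal_crossPolytopeFace (fun i => by have := hb i; omega)
    (fun i => by have := hb i; omega) ?_ (by simp [hk])
  refine Subtype.val_injective.sumElim (fun i j h => Subtype.ext (by simpa using h))
    fun i j h => ?_
  have := hb i; have := hb j
  omega

theorem geomReal_hex_subcomplex_neither_general (n : ℕ) (hn : 3 ≤ n) (T : Finset ℕ)
    (hT : T ⊆ Finset.Icc 1 n) (h1 : n - 1 ∉ T) (h2 : n ∉ T) :
    (¬ Even T.card →
      Nonempty (ContinuousMap.HomotopyEquiv
        (GeomReal (2 * n + 3) (fun t => hexFace n t ∧ t ⊆ chi''Supp n T))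
        (Metric.sphere (0 : EuclideanSpace ℝ (Fin (T.card + 1))) 1))) ∧
    (Even T.card →
      Nonempty (ContinuousMap.HomotopyEquiv
        (GeomReal (2 * n + 3) (fun t => hexFace n t ∧ t ⊆ chi''Supp n T))
        (Metric.sphere (0 : EuclideanSpace ℝ (Fin T.card)) 1))) := by
  have hT' : T ⊆ Icc 1 (n - 2) := fun i hi => by
    have := mem_Icc.1 (hT hi)
    have := ne_of_mem_of_not_mem hi h1
    have := ne_of_mem_of_not_mem hi h2
    exact mem_Icc.2 (by omega)
  rw [hexSubcomplex_eq_crossPolytopeFace (by omega) hT']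
  have hsphere {k : ℕ} (hk : #(chi''Pairs n T) = k) :=
    (nonempty_homeomorph_geomReal_crossPolytopeFace_shift (chi''Pairs_subset hT') hk).map
      Homeomorph.toHomotopyEquiv
  exact ⟨fun hodd => hsphere (by rw [card_chi''Pairs hT', if_neg hodd]),
    fun heven => hsphere (by rw [card_chi''Pairs hT', if_pos heven])⟩

/-- Let `n ≥ 3` and let `T ⊆ {1,…,n}` be nonempty with
`T ∩ {n−1, n} = ∅` (so `T ⊆ {1,…,n−2}`). If `|T|` is odd, the realization of the induced
subcomplex `K''_{χ'',T}` is homotopy equivalent to `S^{|T|}`; if `|T|` is even, it is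
homotopy equivalent to `S^{|T|−1}`. -/
theorem geomReal_hex_subcomplex_neither (n : ℕ) (hn : 3 ≤ n) (T : Finset ℕ)
    (hT : T ⊆ Finset.Icc 1 n) (hne : T.Nonempty) (h1 : n - 1 ∉ T) (h2 : n ∉ T) :
    (¬ Even T.card →
      Nonempty (ContinuousMap.HomotopyEquiv
        (GeomReal (2 * n + 3) (fun t => hexFace n t ∧ t ⊆ chi''Supp n T))
        (Metric.sphere (0 : EuclideanSpace ℝ (Fin (T.card + 1))) 1))) ∧
    (Even T.card →
      Nonempty (ContinuousMap.HomotopyEquiv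
        (GeomReal (2 * n + 3) (fun t => hexFace n t ∧ t ⊆ chi''Supp n T))
        (Metric.sphere (0 : EuclideanSpace ℝ (Fin T.card)) 1))) :=
  geomReal_hex_subcomplex_neither_general n hn T hT h1 h2
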